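/- Let N and L be positive integers and let e_0, …, e_{L−1} ∈ ℂ^N be envelopes satisfying ‖e_l‖ = (N·L)^{−1/2} for every l. Then the Enveloped Sinusoid frame vectors reproduce every signal from its frame coefficients: for every w ∈ ℂ^N, w = Σ_{l=0}^{L−1} Σ_{k=0}^{N−1} Σ_{m=0}^{N−1} ⟨w, a_{l,k,m}⟩·a_{l,k,m}. -/

import Mathlib

open scoped BigOperators
open Finset

/-- Inner product on ℂ^N: ⟨v, w⟩ = Σ_n v[n]·conj(w[n]). -/
noncomputable def cInner {N : ℕ} (v w : Fin N → ℂ) : ℂ :=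
  ∑ n, v n * (starRingEnd ℂ) (w n)

/-- Norm on ℂ^N: ‖v‖ = ⟨v, v⟩^(1/2) = (Σ_n |v[n]|²)^(1/2). -/
noncomputable def cNorm {N : ℕ} (v : Fin N → ℂ) : ℝ :=
  Real.sqrt (∑ n, ‖v n‖ ^ 2)

/-- Enveloped Sinusoid frame vector:
    a_{e,k,m}[n] = e[(n−m) mod N]·exp(2πi·k·(n−m)/N).
    (Fin subtraction `n - m` is subtraction mod N.) -/
noncomputable def espVec {N : ℕ} (e : Fin N → ℂ) (k m : Fin N) : Fin N → ℂ :=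
  fun n => e (n - m) *
    Complex.exp (2 * Real.pi * Complex.I * ((k : ℕ) : ℂ) *
      (((((n : ℕ) : ℤ) - ((m : ℕ) : ℤ)) : ℤ) : ℂ) / ((N : ℕ) : ℂ))

/-!
For a single envelope `e`, the phases `exp(2πik(n−p)/N)` summed over the frequencies `k` vanish
unless `n = p`, so `Σ_{k,m} ⟨w, a_{k,m}⟩ a_{k,m}` collapses to `Σ_m |e(n−m)|² · N · w[n]`, i.e. the
frame operator of one envelope is `N‖e‖²` times the identity. With `‖e_l‖² = 1/(NL)` each of the
`L` envelopes contributes `w/L`.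
-/

open Complex ComplexConjugate
open scoped Real

lemma cNorm_sq {N : ℕ} (v : Fin N → ℂ) : cNorm v ^ 2 = ∑ n, ‖v n‖ ^ 2 :=
  Real.sq_sqrt (sum_nonneg fun _ _ => sq_nonneg _)

lemma Fin.natCast_dvd_val_sub_val_iff {N : ℕ} (n p : Fin N) :
    (N : ℤ) ∣ (n : ℤ) - p ↔ n = p := by
  refine ⟨fun h => ?_, fun h => by simp [h]⟩
  have hlt : |(n : ℤ) - p| < N := abs_sub_lt_iff.2 ⟨by omega, by omega⟩
  have := Int.eq_zero_of_abs_lt_dvd h hlt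
  omega

lemma sum_exp_two_pi_I_mul_div (N : ℕ) [NeZero N] (a : ℤ) :
    ∑ k : Fin N, exp (2 * π * I * (k : ℕ) * a / N) = if (N : ℤ) ∣ a then (N : ℂ) else 0 := by
  have hζ := isPrimitiveRoot_exp N (NeZero.ne N)
  set z := exp (2 * π * I / N) ^ a with hz
  have hzN : z ^ N = 1 := by
    rw [hz, ← zpow_natCast, ← zpow_mul, hζ.zpow_eq_one_iff_dvd]
    exact dvd_mul_left _ _
  have hterm (k : ℕ) : exp (2 * π * I * k * a / N) = z ^ k := by
    rw [hz, ← exp_int_mul, ← exp_nat_mul]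
    congr 1
    ring
  simp_rw [hterm]
  rw [Fin.sum_univ_eq_sum_range (z ^ ·)]
  split_ifs with ha
  · simp [hz, (hζ.zpow_eq_one_iff_dvd a).2 ha]
  · rw [geom_sum_eq (mt (hζ.zpow_eq_one_iff_dvd a).1 ha), hzN, sub_self, zero_div]

lemma conj_espVec_mul_espVec {N : ℕ} (e : Fin N → ℂ) (k m n p : Fin N) :
    conj (espVec e k m p) * espVec e k m n =
      conj (e (p - m)) * e (n - m) * exp (2 * π * I * (k : ℕ) * ((n : ℤ) - p : ℤ) / N) := by
  simp only [espVec, map_mul, ← exp_conj]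
  rw [mul_mul_mul_comm, ← exp_add]
  congr 2
  simp only [map_div₀, map_mul, map_ofNat, conj_ofReal, conj_I, map_natCast, map_intCast]
  push_cast
  ring

lemma sum_conj_espVec_mul_espVec {N : ℕ} [NeZero N] (e : Fin N → ℂ) (m n p : Fin N) :
    ∑ k, conj (espVec e k m p) * espVec e k m n =
      if n = p then N * (‖e (n - m)‖ ^ 2 : ℂ) else 0 := by
  simp_rw [conj_espVec_mul_espVec, ← mul_sum, sum_exp_two_pi_I_mul_div,
    Fin.natCast_dvd_val_sub_val_iff]
  split_ifs with h
  · rw [h, mul_comm, mul_comm (conj _), mul_conj']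
  · rw [mul_zero]

theorem sum_cInner_smul_espVec {N : ℕ} [NeZero N] (e w : Fin N → ℂ) :
    ∑ k, ∑ m, cInner w (espVec e k m) • espVec e k m = ((N * cNorm e ^ 2 : ℝ) : ℂ) • w := by
  funext n
  simp only [Finset.sum_apply, Pi.smul_apply, smul_eq_mul, cInner, sum_mul]
  calc ∑ k, ∑ m, ∑ p, w p * conj (espVec e k m p) * espVec e k m n
      = ∑ m, ∑ p, w p * ∑ k, conj (espVec e k m p) * espVec e k m n := by
        rw [sum_comm]
        refine sum_congr rfl fun m _ => ?_
        rw [sum_comm]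
        simp_rw [mul_sum, mul_assoc]
    _ = ∑ m, w n * (N * ‖e (n - m)‖ ^ 2) := by
        simp_rw [sum_conj_espVec_mul_espVec, mul_ite, mul_zero, sum_ite_eq, mem_univ, if_true]
    _ = ((N * cNorm e ^ 2 : ℝ) : ℂ) * w n := by
        have hshift : ∑ m, (‖e (n - m)‖ ^ 2 : ℂ) = ∑ j, (‖e j‖ ^ 2 : ℂ) :=
          Fintype.sum_equiv (Equiv.subLeft n) _ _ fun _ => rfl
        rw [← mul_sum, ← mul_sum, hshift, cNorm_sq]
        push_cast
        ring

/-- If every envelope has norm (N·L)^(−1/2), the ESP frame reproduces every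
    signal from its frame coefficients. -/
theorem esp_parseval_reconstruction (N L : ℕ) (hN : 0 < N) (hL : 0 < L)
    (e : Fin L → Fin N → ℂ)
    (he : ∀ l, cNorm (e l) = 1 / Real.sqrt ((N : ℝ) * (L : ℝ)))
    (w : Fin N → ℂ) :
    w = ∑ l : Fin L, ∑ k : Fin N, ∑ m : Fin N,
        cInner w (espVec (e l) k m) • espVec (e l) k m := by
  have : NeZero N := ⟨hN.ne'⟩
  have hNL : (0 : ℝ) < N * L := by positivity
  have hframe (l : Fin L) : (N * cNorm (e l) ^ 2 : ℝ) = 1 / L := by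
    rw [he, div_pow, Real.sq_sqrt hNL.le]
    field_simp
  simp_rw [sum_cInner_smul_espVec, hframe]
  rw [sum_const, card_univ, Fintype.card_fin, ← Nat.cast_smul_eq_nsmul ℂ, smul_smul]
  have hLC : (L : ℂ) ≠ 0 := by exact_mod_cast hL.ne'
  push_cast
  rw [mul_one_div_cancel hLC, one_smul]
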